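/- (CSS-like construction for asymmetric quantum codes) Let C_1 and C_2 be linear codes in F^n of dimensions k_1 and k_2 respectively, with k_1 + k_2 ≥ n and C_1^⊥ ⊆ C_2 (Euclidean duals). Set d_z = max{ wH(C_2 \ C_1^⊥), wH(C_1 \ C_2^⊥) } and d_x = min{ wH(C_2 \ C_1^⊥), wH(C_1 \ C_2^⊥) }. Then there exists an [[n, k_1 + k_2 − n, d_z, d_x]]_q asymmetric quantum code. -/

import Mathlib

open Matrix

open scoped BigOperators

/-- The error operator `X(a)`, acting on `ℂ^{q^n}` (with coordinates indexed by
`F^n`) by `X(a) e_v = e_{a+v}`. -/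
noncomputable def Xq (F : Type) [Field F] [Fintype F] [DecidableEq F]
    (n : ℕ) (a : Fin n → F) : Matrix (Fin n → F) (Fin n → F) ℂ :=
  Matrix.of fun w v => if w = a + v then 1 else 0

/-- The error operator `Z(b)`, acting on `ℂ^{q^n}` by
`Z(b) e_v = ω^{Tr(b·v)} e_v`, where `ω = exp(2πi/p)` and the absolute trace
`Tr(b·v) ∈ F_p` is lifted to `{0,…,p−1} ⊆ ℤ`. -/
noncomputable def Zq (p : ℕ) (F : Type) [Field F] [Fintype F] [DecidableEq F]
    [CharP F p] [Algebra (ZMod p) F]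
    (n : ℕ) (b : Fin n → F) : Matrix (Fin n → F) (Fin n → F) ℂ :=
  Matrix.of fun w v =>
    if w = v then
      Complex.exp (2 * Real.pi * Complex.I / p) ^
        (Algebra.trace (ZMod p) F (b ⬝ᵥ v)).val
    else 0

/-- The quantum weight of `(a|b)`: the number of indices `i` with `a_i ≠ 0` or
`b_i ≠ 0`. -/
noncomputable def wQq (F : Type) [Zero F] (n : ℕ) (a b : Fin n → F) : ℕ :=
  {i : Fin n | a i ≠ 0 ∨ b i ≠ 0}.ncard

/-- The Hamming weight of a vector in `F^n`. -/
noncomputable def wH (F : Type) [Zero F] (n : ℕ) (x : Fin n → F) : ℕ :=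
  {i : Fin n | x i ≠ 0}.ncard

/-- `Q` is an `[[n, k, d]]_q` code (`q = |F|`): a subspace of `ℂ^{q^n}` of
dimension `q^k` satisfying the Knill–Laflamme condition for `d`, i.e. for all
errors `X(a)Z(b)` of quantum weight at most `d − 1` and all orthogonal
`φ, ψ ∈ Q` one has `⟨φ, X(a)Z(b) ψ⟩ = 0`. -/
noncomputable def IsQECC (p : ℕ) (F : Type) [Field F] [Fintype F] [DecidableEq F]
    [CharP F p] [Algebra (ZMod p) F]
    (n k d : ℕ) (Q : Submodule ℂ ((Fin n → F) → ℂ)) : Prop :=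
  Module.finrank ℂ Q = Fintype.card F ^ k ∧
  ∀ a b : Fin n → F, wQq F n a b ≤ d - 1 →
    ∀ φ ∈ Q, ∀ ψ ∈ Q, star φ ⬝ᵥ ψ = 0 →
      star φ ⬝ᵥ (Xq F n a * Zq p F n b).mulVec ψ = 0

/-- `Q` is an `[[n, k, d_z, d_x]]_q` asymmetric quantum code: a subspace of
`ℂ^{q^n}` of dimension `q^k` such that for all `a, b ∈ F^n` with
`wH(a) ≤ d_x − 1` and `wH(b) ≤ d_z − 1` and all orthogonal `φ, ψ ∈ Q` one has
`⟨φ, X(a)Z(b) ψ⟩ = 0`. -/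
noncomputable def IsAQECC (p : ℕ) (F : Type) [Field F] [Fintype F]
    [DecidableEq F] [CharP F p] [Algebra (ZMod p) F]
    (n k dz dx : ℕ) (Q : Submodule ℂ ((Fin n → F) → ℂ)) : Prop :=
  Module.finrank ℂ Q = Fintype.card F ^ k ∧
  ∀ a b : Fin n → F, wH F n a ≤ dx - 1 → wH F n b ≤ dz - 1 →
    ∀ φ ∈ Q, ∀ ψ ∈ Q, star φ ⬝ᵥ ψ = 0 →
      star φ ⬝ᵥ (Xq F n a * Zq p F n b).mulVec ψ = 0

/-- The Euclidean dual of a linear code `C ⊆ F^n`. -/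
def dualE (F : Type) [Field F] (n : ℕ) (C : Submodule F (Fin n → F)) :
    Set (Fin n → F) :=
  {x | ∀ c ∈ C, x ⬝ᵥ c = 0}

/-!
Write `D = B^⊥ ≤ A` and let `Q` be the space of functions on `F^n` that vanish off `A` and are
constant on the cosets of `D`, i.e. the span of the coset states `|x + D⟩`, `x ∈ A`; its dimension
is `|A / D| = q^(k_A + k_B - n)`. Take an error `X(a)Z(b)` within the weight bounds. If `a ∉ A`,
then `X(a)` moves the support of `Q` off `A`, so `⟨φ, X(a)Z(b)ψ⟩ = 0`. If `b ∉ B = D^⊥`, the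
character `v ↦ ω^Tr(b·v)` is nontrivial on `D`, and its sum against a `D`-periodic function
vanishes. Otherwise the weight bounds force `a ∈ D` and `b ∈ A^⊥`, and `X(a)Z(b)` is the identity
on `Q`. Applying this with `(A, B) = (C₁, C₂)` or `(C₂, C₁)` puts the larger distance on the
`Z` side.
-/

section EuclideanDual

variable {F ι : Type*} [Field F] [Fintype ι]

lemma dotProductBilin_isRefl : (dotProductBilin F F : LinearMap.BilinForm F (ι → F)).IsRefl :=
  fun x y h => by simpa [dotProduct_comm] using h

lemma dotProductBilin_nondegenerate :
    (dotProductBilin F F : LinearMap.BilinForm F (ι → F)).Nondegenerate := by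
  classical
  refine (LinearMap.IsRefl.nondegenerate_iff_separatingLeft dotProductBilin_isRefl).mpr ?_
  intro x hx
  funext i
  simpa using hx (Pi.single i 1)

noncomputable def euclideanDual (C : Submodule F (ι → F)) : Submodule F (ι → F) :=
  LinearMap.BilinForm.orthogonal (dotProductBilin F F) C

lemma mem_euclideanDual {C : Submodule F (ι → F)} {x : ι → F} :
    x ∈ euclideanDual C ↔ ∀ c ∈ C, c ⬝ᵥ x = 0 :=
  LinearMap.BilinForm.mem_orthogonal_iff

lemma finrank_euclideanDual (C : Submodule F (ι → F)) :
    Module.finrank F (euclideanDual C) = Fintype.card ι - Module.finrank F C := by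
  rw [euclideanDual, LinearMap.BilinForm.finrank_orthogonal dotProductBilin_nondegenerate,
    Module.finrank_fintype_fun_eq_card]

lemma euclideanDual_euclideanDual (C : Submodule F (ι → F)) :
    euclideanDual (euclideanDual C) = C :=
  LinearMap.BilinForm.orthogonal_orthogonal dotProductBilin_nondegenerate
    (dotProductBilin_isRefl (F := F) (ι := ι)) C

lemma euclideanDual_le_comm {C C' : Submodule F (ι → F)} :
    euclideanDual C ≤ C' ↔ euclideanDual C' ≤ C :=
  ⟨fun h => euclideanDual_euclideanDual C ▸ LinearMap.BilinForm.orthogonal_le h,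
    fun h => euclideanDual_euclideanDual C' ▸ LinearMap.BilinForm.orthogonal_le h⟩

end EuclideanDual

lemma coe_euclideanDual {F : Type} [Field F] {n : ℕ} (C : Submodule F (Fin n → F)) :
    (euclideanDual C : Set (Fin n → F)) = dualE F n C := by
  ext x
  simp only [SetLike.mem_coe, mem_euclideanDual, dualE, Set.mem_ofPred_eq, dotProduct_comm x]

lemma AddChar.sum_mul_eq_zero_of_periodic {G R : Type*} [AddCommGroup G] [Fintype G] [CommRing R]
    [IsDomain R] (ψ : AddChar G R) {h : G → R} {d : G} (hh : Function.Periodic h d)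
    (hd : ψ d ≠ 1) : ∑ u, h u * ψ u = 0 := by
  have hshift : ∑ u, h u * ψ u = ψ d * ∑ u, h u * ψ u := by
    rw [Finset.mul_sum, ← Equiv.sum_comp (Equiv.addRight d)]
    refine Fintype.sum_congr _ _ fun u => ?_
    rw [Equiv.coe_addRight, hh u, AddChar.map_add_eq_mul]
    ring
  have : (ψ d - 1) * ∑ u, h u * ψ u = 0 := by rw [sub_mul, ← hshift, one_mul, sub_self]
  exact (mul_eq_zero.mp this).resolve_left (sub_ne_zero.mpr hd)

section TraceCharacter

variable (p : ℕ) {F ι : Type*} [Field F] [Fintype ι] [Algebra (ZMod p) F]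

lemma exp_two_pi_I_div_pow_self [NeZero p] : Complex.exp (2 * Real.pi * Complex.I / p) ^ p = 1 :=
  (Complex.isPrimitiveRoot_exp p (NeZero.ne p)).pow_eq_one

noncomputable def traceChar [NeZero p] (b : ι → F) : AddChar (ι → F) ℂ :=
  (AddChar.zmodChar p (exp_two_pi_I_div_pow_self p)).compAddMonoidHom
    ((Algebra.trace (ZMod p) F).toAddMonoidHom.comp (dotProductBilin F F b).toAddMonoidHom)

lemma traceChar_apply [NeZero p] (b v : ι → F) :
    traceChar p b v =
      Complex.exp (2 * Real.pi * Complex.I / p) ^ (Algebra.trace (ZMod p) F (b ⬝ᵥ v)).val :=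
  rfl

lemma traceChar_eq_one_of_dotProduct_eq_zero [NeZero p] {b v : ι → F} (h : b ⬝ᵥ v = 0) :
    traceChar p b v = 1 := by
  simp [traceChar_apply, h]

lemma exists_traceChar_ne_one [Fact p.Prime] [Finite F] [CharP F p] {D : Submodule F (ι → F)}
    {b : ι → F} (hb : b ∉ euclideanDual D) : ∃ d ∈ D, traceChar p b d ≠ 1 := by
  obtain ⟨c, hcD, hcb⟩ : ∃ c ∈ D, c ⬝ᵥ b ≠ 0 := by simpa [mem_euclideanDual] using hb
  obtain ⟨y, hy⟩ : ∃ y, Algebra.trace (ZMod p) F (b ⬝ᵥ c * y) ≠ 0 := by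
    obtain rfl : p = ringChar F := (ringChar.eq F p).symm
    exact FiniteField.trace_to_zmod_nondegenerate F (by rwa [dotProduct_comm])
  refine ⟨y • c, D.smul_mem y hcD, ?_⟩
  rw [traceChar_apply, dotProduct_smul, smul_eq_mul, mul_comm y]
  exact (Complex.isPrimitiveRoot_exp p (NeZero.ne p)).pow_ne_one_of_pos_of_lt
    (by simpa [ZMod.val_eq_zero] using hy) (ZMod.val_lt _)

end TraceCharacter

section ErrorOperators

variable (p : ℕ) [NeZero p] {F : Type} [Field F] [Fintype F] [DecidableEq F] [CharP F p]
  [Algebra (ZMod p) F] {n : ℕ}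

lemma Xq_mulVec (a : Fin n → F) (ψ : (Fin n → F) → ℂ) : Xq F n a *ᵥ ψ = fun w => ψ (w - a) := by
  funext w
  simp [Xq, mulVec, dotProduct, ite_mul, ← sub_eq_iff_eq_add']

lemma Zq_mulVec (b : Fin n → F) (ψ : (Fin n → F) → ℂ) :
    Zq p F n b *ᵥ ψ = fun w => traceChar p b w * ψ w := by
  funext w
  simp [Zq, mulVec, dotProduct, ite_mul, traceChar_apply]

lemma Xq_mul_Zq_mulVec_apply (a b : Fin n → F) (ψ : (Fin n → F) → ℂ) (w : Fin n → F) :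
    ((Xq F n a * Zq p F n b) *ᵥ ψ) w = traceChar p b (w - a) * ψ (w - a) := by
  rw [← mulVec_mulVec, Zq_mulVec, Xq_mulVec]

end ErrorOperators

section CosetLift

variable {R V : Type*} [Ring R] [AddCommGroup V] [Module R V] (K : Type*) [Semiring K]
  (A D : Submodule R V)

noncomputable def cosetLift : (A ⧸ D.comap A.subtype → K) →ₗ[K] V → K :=
  Function.ExtendByZero.linearMap K A.subtype ∘ₗ LinearMap.funLeft K K (D.comap A.subtype).mkQ

variable {K A D}

lemma cosetLift_injective : Function.Injective (cosetLift K A D) :=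
  (Function.extend_injective Subtype.val_injective (0 : V → K)).comp
    (LinearMap.funLeft_injective_of_surjective K K _ (Submodule.mkQ_surjective _))

lemma cosetLift_apply_coe (f : A ⧸ D.comap A.subtype → K) (x : A) :
    cosetLift K A D f x = f (Submodule.Quotient.mk x) :=
  Subtype.val_injective.extend_apply _ _ x

lemma cosetLift_apply_of_notMem (f : A ⧸ D.comap A.subtype → K) {v : V} (hv : v ∉ A) :
    cosetLift K A D f v = 0 :=
  Function.extend_apply' _ _ _ fun ⟨x, hx⟩ => hv (hx ▸ x.2)

lemma cosetLift_periodic (hDA : D ≤ A) (f : A ⧸ D.comap A.subtype → K) {d : V} (hd : d ∈ D) :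
    Function.Periodic (cosetLift K A D f) d := by
  intro v
  by_cases hv : v ∈ A
  · have hvd : v + d ∈ A := A.add_mem hv (hDA hd)
    calc cosetLift K A D f (v + d) = f (Submodule.Quotient.mk ⟨v + d, hvd⟩) :=
          cosetLift_apply_coe f ⟨v + d, hvd⟩
      _ = f (Submodule.Quotient.mk ⟨v, hv⟩) := congrArg f <| by
          rw [Submodule.Quotient.eq (D.comap A.subtype)]
          simpa using hd
      _ = cosetLift K A D f v := (cosetLift_apply_coe f ⟨v, hv⟩).symm
  · rw [cosetLift_apply_of_notMem f hv,
      cosetLift_apply_of_notMem f fun h => hv (by simpa using A.sub_mem h (hDA hd))]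

lemma finrank_range_cosetLift {R V K : Type*} [Field R] [Finite R] [AddCommGroup V] [Module R V]
    [Module.Finite R V] [Field K] {A D : Submodule R V} (hDA : D ≤ A) :
    Module.finrank K (LinearMap.range (cosetLift K A D)) =
      Nat.card R ^ (Module.finrank R A - Module.finrank R D) := by
  have : Finite V := Module.finite_of_finite R
  have : Finite (A ⧸ D.comap A.subtype) := Module.finite_of_finite R
  have : Fintype (A ⧸ D.comap A.subtype) := Fintype.ofFinite _
  have hquot := Submodule.finrank_quotient_add_finrank (D.comap A.subtype)
  rw [(Submodule.comapSubtypeEquivOfLe hDA).finrank_eq] at hquot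
  rw [LinearMap.finrank_range_of_inj cosetLift_injective, Module.finrank_fintype_fun_eq_card,
    ← Nat.card_eq_fintype_card, Module.natCard_eq_pow_finrank (K := R)]
  congr 1
  omega

end CosetLift

section HammingWeight

variable {F : Type} [Zero F] {n : ℕ}

lemma wH_pos {x : Fin n → F} (hx : x ≠ 0) : 0 < wH F n x := by
  obtain ⟨i, hi⟩ := Function.ne_iff.mp hx
  exact (Set.ncard_pos (Set.toFinite _)).mpr ⟨i, hi⟩

lemma mem_of_wH_le_of_le_sInf {S T : Set (Fin n → F)} (hT : 0 ∈ T) {d : ℕ}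
    (hd : d ≤ sInf (wH F n '' (S \ T))) {x : Fin n → F} (hxS : x ∈ S) (hx : wH F n x ≤ d - 1) :
    x ∈ T := by
  by_contra hxT
  have hx0 : x ≠ 0 := by rintro rfl; exact hxT hT
  have hle : sInf (wH F n '' (S \ T)) ≤ wH F n x := Nat.sInf_le ⟨x, ⟨hxS, hxT⟩, rfl⟩
  have := wH_pos hx0
  omega

end HammingWeight

section CSS

variable (p : ℕ) [NeZero p] {F : Type} [Field F] [Fintype F] [DecidableEq F] [CharP F p]
  [Algebra (ZMod p) F] {n : ℕ}

lemma Xq_mul_Zq_mulVec_eq_self {A : Submodule F (Fin n → F)} {a b : Fin n → F}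
    {ψ : (Fin n → F) → ℂ} (hb : b ∈ euclideanDual A) (hψA : ∀ v ∉ A, ψ v = 0)
    (hψa : Function.Periodic ψ a) : (Xq F n a * Zq p F n b) *ᵥ ψ = ψ := by
  funext w
  rw [Xq_mul_Zq_mulVec_apply, hψa.sub_eq]
  by_cases hw : w - a ∈ A
  · rw [traceChar_eq_one_of_dotProduct_eq_zero p
      ((dotProduct_comm _ _).trans (mem_euclideanDual.mp hb _ hw)), one_mul]
  · rw [← hψa.sub_eq, hψA _ hw, mul_zero]

lemma star_dotProduct_Xq_mul_Zq_mulVec_of_notMem {A : Submodule F (Fin n → F)} {a : Fin n → F}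
    (b : Fin n → F) {φ ψ : (Fin n → F) → ℂ} (ha : a ∉ A) (hφA : ∀ v ∉ A, φ v = 0)
    (hψA : ∀ v ∉ A, ψ v = 0) : star φ ⬝ᵥ (Xq F n a * Zq p F n b) *ᵥ ψ = 0 := by
  refine Finset.sum_eq_zero fun w _ => ?_
  rw [Xq_mul_Zq_mulVec_apply]
  by_cases hw : w ∈ A
  · have hwa : w - a ∉ A := fun h => ha (by simpa using A.sub_mem hw h)
    simp [hψA _ hwa]
  · simp [hφA _ hw]

lemma star_dotProduct_Xq_mul_Zq_mulVec_of_notMem_euclideanDual [Fact p.Prime]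
    {D : Submodule F (Fin n → F)} (a : Fin n → F) {b : Fin n → F} {φ ψ : (Fin n → F) → ℂ}
    (hb : b ∉ euclideanDual D) (hφ : ∀ d ∈ D, Function.Periodic φ d)
    (hψ : ∀ d ∈ D, Function.Periodic ψ d) : star φ ⬝ᵥ (Xq F n a * Zq p F n b) *ᵥ ψ = 0 := by
  obtain ⟨d, hdD, hd⟩ := exists_traceChar_ne_one p hb
  have hperiodic : Function.Periodic (fun u => star (φ (u + a)) * ψ u) d := fun u => by
    simp only [add_right_comm u d a, hφ d hdD (u + a), hψ d hdD u]
  rw [dotProduct, ← Equiv.sum_comp (Equiv.addRight a)]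
  refine Eq.trans (Fintype.sum_congr _ _ fun u => ?_)
    ((traceChar p b).sum_mul_eq_zero_of_periodic hperiodic hd)
  rw [Xq_mul_Zq_mulVec_apply, Equiv.coe_addRight, add_sub_cancel_right, Pi.star_apply]
  ring

theorem exists_isAQECC_of_euclideanDual_le [Fact p.Prime] {A B : Submodule F (Fin n → F)}
    (hBA : euclideanDual B ≤ A) {dz dx : ℕ}
    (hdz : dz ≤ sInf (wH F n '' ((B : Set (Fin n → F)) \ dualE F n A)))
    (hdx : dx ≤ sInf (wH F n '' ((A : Set (Fin n → F)) \ dualE F n B))) :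
    ∃ Q : Submodule ℂ ((Fin n → F) → ℂ),
      IsAQECC p F n (Module.finrank F A + Module.finrank F B - n) dz dx Q := by
  rw [← coe_euclideanDual] at hdz hdx
  refine ⟨LinearMap.range (cosetLift ℂ A (euclideanDual B)), ?_, ?_⟩
  · have hB : Module.finrank F B ≤ n := by simpa using B.finrank_le
    rw [finrank_range_cosetLift hBA, finrank_euclideanDual, Fintype.card_fin,
      Nat.card_eq_fintype_card]
    congr 1
    omega
  rintro a b ha hb _ ⟨f, rfl⟩ _ ⟨g, rfl⟩ horth
  by_cases hbB : b ∈ B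
  · have hbA : b ∈ euclideanDual A := mem_of_wH_le_of_le_sInf (zero_mem _) hdz hbB hb
    by_cases haA : a ∈ A
    · have haD : a ∈ euclideanDual B := mem_of_wH_le_of_le_sInf (zero_mem _) hdx haA ha
      rw [Xq_mul_Zq_mulVec_eq_self p hbA (fun _ => cosetLift_apply_of_notMem g)
        (cosetLift_periodic hBA g haD), horth]
    · exact star_dotProduct_Xq_mul_Zq_mulVec_of_notMem p b haA
        (fun _ => cosetLift_apply_of_notMem f) (fun _ => cosetLift_apply_of_notMem g)
  · exact star_dotProduct_Xq_mul_Zq_mulVec_of_notMem_euclideanDual p a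
      (by rwa [euclideanDual_euclideanDual]) (fun _ => cosetLift_periodic hBA f)
      (fun _ => cosetLift_periodic hBA g)

end CSS

theorem statement17_general (p : ℕ) [Fact p.Prime] (F : Type) [Field F] [Fintype F]
    [DecidableEq F] [CharP F p] [Algebra (ZMod p) F]
    (n k1 k2 : ℕ)
    (C1 C2 : Submodule F (Fin n → F))
    (hk1 : Module.finrank F C1 = k1) (hk2 : Module.finrank F C2 = k2)
    (hnest : dualE F n C1 ⊆ (C2 : Set (Fin n → F))) :
    ∃ Q : Submodule ℂ ((Fin n → F) → ℂ),
      IsAQECC p F n (k1 + k2 - n)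
        (max (sInf (wH F n '' ((C2 : Set (Fin n → F)) \ dualE F n C1)))
             (sInf (wH F n '' ((C1 : Set (Fin n → F)) \ dualE F n C2))))
        (min (sInf (wH F n '' ((C2 : Set (Fin n → F)) \ dualE F n C1)))
             (sInf (wH F n '' ((C1 : Set (Fin n → F)) \ dualE F n C2)))) Q := by
  have h12 : euclideanDual C1 ≤ C2 := fun x hx => hnest (by rwa [← coe_euclideanDual])
  rcases le_total (sInf (wH F n '' ((C1 : Set (Fin n → F)) \ dualE F n C2)))
      (sInf (wH F n '' ((C2 : Set (Fin n → F)) \ dualE F n C1))) with h | h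
  · obtain ⟨Q, hQ⟩ := exists_isAQECC_of_euclideanDual_le p (euclideanDual_le_comm.mp h12)
      (max_le le_rfl h) (min_le_right _ _)
    exact ⟨Q, by rwa [hk1, hk2] at hQ⟩
  · obtain ⟨Q, hQ⟩ := exists_isAQECC_of_euclideanDual_le p h12 (max_le h le_rfl) (min_le_left _ _)
    exact ⟨Q, by rwa [hk1, hk2, add_comm k2] at hQ⟩

/-- CSS-like construction for asymmetric quantum codes: if
`C_1, C_2 ⊆ F^n` are linear codes of dimensions `k_1, k_2` with
`k_1 + k_2 ≥ n` and `C_1^⊥ ⊆ C_2`, and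
`d_z = max{wH(C_2 \ C_1^⊥), wH(C_1 \ C_2^⊥)}`,
`d_x = min{wH(C_2 \ C_1^⊥), wH(C_1 \ C_2^⊥)}`, then there exists an
`[[n, k_1 + k_2 − n, d_z, d_x]]_q` asymmetric quantum code. -/
theorem statement17 (p : ℕ) [Fact p.Prime] (F : Type) [Field F] [Fintype F]
    [DecidableEq F] [CharP F p] [Algebra (ZMod p) F]
    (n k1 k2 : ℕ) (hn : n ≤ k1 + k2)
    (C1 C2 : Submodule F (Fin n → F))
    (hk1 : Module.finrank F C1 = k1) (hk2 : Module.finrank F C2 = k2)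
    (hnest : dualE F n C1 ⊆ (C2 : Set (Fin n → F))) :
    ∃ Q : Submodule ℂ ((Fin n → F) → ℂ),
      IsAQECC p F n (k1 + k2 - n)
        (max (sInf (wH F n '' ((C2 : Set (Fin n → F)) \ dualE F n C1)))
             (sInf (wH F n '' ((C1 : Set (Fin n → F)) \ dualE F n C2))))
        (min (sInf (wH F n '' ((C2 : Set (Fin n → F)) \ dualE F n C1)))
             (sInf (wH F n '' ((C1 : Set (Fin n → F)) \ dualE F n C2)))) Q :=
  statement17_general p F n k1 k2 C1 C2 hk1 hk2 hnest
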